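/- arXiv:1602.07860 — 7 statements merged into one kernel-verified Lean document; each statement's English description precedes it below -/
import Mathlib

section
/- If F : 2^X → ℝ is non-negative, monotone, and submodular on a finite ground set X, and A^G is the set of size k produced by greedy maximization (iteratively adding the element of maximal marginal gain), then F(A^G) ≥ (1 - 1/e) · F(A*), where A* maximizes F over all subsets of size at most k. -/
/-!
Let `S` be any set of size at most `k` and `δ` the largest marginal gain at the current greedy
set `A`. Submodularity bounds the gain of adding `S` to `A` by `#S * δ ≤ k * δ`, so by
monotonicity one greedy step closes at least a `1/k` fraction of the gap `F S - F A`. After `k`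
steps the gap has shrunk by the factor `(1 - 1/k)^k ≤ e⁻¹`.
-/

open Finset

section

variable {α : Type*} [DecidableEq α] {F : Finset α → ℝ}

theorem le_add_card_mul_of_marginal_le
    (hsub : ∀ A B : Finset α, A ⊆ B → ∀ i ∉ B,
      F (insert i B) - F B ≤ F (insert i A) - F A)
    {A : Finset α} {δ : ℝ} (hδ : 0 ≤ δ) (hgain : ∀ j ∉ A, F (insert j A) - F A ≤ δ)
    (S : Finset α) : F (A ∪ S) ≤ F A + #S * δ := by
  induction S using Finset.induction with
  | empty => simp
  | @insert j S hjS ih =>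
    have hstep : F (insert j (A ∪ S)) ≤ F (A ∪ S) + δ := by
      by_cases hj : j ∈ A ∪ S
      · rw [insert_eq_self.2 hj]
        linarith
      · have hjA : j ∉ A := fun h ↦ hj (mem_union_left S h)
        linarith [hsub A (A ∪ S) subset_union_left j hj, hgain j hjA]
    rw [union_insert, card_insert_of_notMem hjS]
    push_cast
    linarith

theorem greedy_step_gap_le
    (hmono : ∀ A B : Finset α, A ⊆ B → F A ≤ F B)
    (hsub : ∀ A B : Finset α, A ⊆ B → ∀ i ∉ B,
      F (insert i B) - F B ≤ F (insert i A) - F A)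
    {k : ℕ} (hk : 1 ≤ k) {S : Finset α} (hS : #S ≤ k) {A : Finset α} {i : α}
    (hmax : ∀ j ∉ A, F (insert j A) - F A ≤ F (insert i A) - F A) :
    F S - F (insert i A) ≤ (1 - 1 / k) * (F S - F A) := by
  set δ := F (insert i A) - F A
  have hk0 : (0 : ℝ) < k := by exact_mod_cast hk
  have hδ : 0 ≤ δ := sub_nonneg.2 (hmono _ _ (subset_insert i A))
  have hgap : F S - F A ≤ k * δ :=
    calc F S - F A ≤ F (A ∪ S) - F A := by linarith [hmono S (A ∪ S) subset_union_right]
      _ ≤ #S * δ := by linarith [le_add_card_mul_of_marginal_le hsub hδ hmax S]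
      _ ≤ k * δ := by gcongr
  have hgap' : (F S - F A) / k ≤ δ := (div_le_iff₀' hk0).2 hgap
  calc F S - F (insert i A) = (F S - F A) - δ := by ring
    _ ≤ (F S - F A) - (F S - F A) / k := by linarith
    _ = (1 - 1 / k) * (F S - F A) := by ring

end

theorem pac_stmt_0_general {X : Type*} [DecidableEq X]
    (F : Finset X → ℝ)
    (hnonneg : ∀ A : Finset X, 0 ≤ F A)
    (hmono : ∀ A B : Finset X, A ⊆ B → F A ≤ F B)
    (hsub : ∀ A B : Finset X, A ⊆ B → ∀ i ∉ B,
      F (insert i B) - F B ≤ F (insert i A) - F A)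
    (k : ℕ) (hk : 1 ≤ k)
    (A : ℕ → Finset X)
    (hgreedy : ∀ m < k, ∃ i ∉ A m, A (m + 1) = insert i (A m) ∧
      ∀ j ∉ A m, F (insert j (A m)) - F (A m) ≤ F (insert i (A m)) - F (A m))
    (Astar : Finset X) (hcard : Astar.card ≤ k) :
    F (A k) ≥ (1 - (Real.exp 1)⁻¹) * F Astar := by
  have hc : (0 : ℝ) ≤ 1 - 1 / k :=
    sub_nonneg.2 (div_le_one_of_le₀ (by exact_mod_cast hk) (Nat.cast_nonneg k))
  have hdecay : F Astar - F (A k) ≤ (1 - 1 / k) ^ k * (F Astar - F (A 0)) := by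
    refine le_geom (u := fun m ↦ F Astar - F (A m)) hc k fun m hm ↦ ?_
    obtain ⟨i, -, hstep, hmax⟩ := hgreedy m hm
    simpa only [hstep] using greedy_step_gap_le hmono hsub hk hcard hmax
  have hexp : (1 - 1 / k : ℝ) ^ k ≤ (Real.exp 1)⁻¹ := by
    rw [← Real.exp_neg]
    exact Real.one_sub_div_pow_le_exp_neg (by exact_mod_cast hk)
  have hgap : F Astar - F (A 0) ≤ F Astar := by linarith [hnonneg (A 0)]
  suffices F Astar - F (A k) ≤ (Real.exp 1)⁻¹ * F Astar by linarith
  calc F Astar - F (A k) ≤ (1 - 1 / k) ^ k * (F Astar - F (A 0)) := hdecay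
    _ ≤ (1 - 1 / k) ^ k * F Astar := mul_le_mul_of_nonneg_left hgap (pow_nonneg hc k)
    _ ≤ (Real.exp 1)⁻¹ * F Astar := mul_le_mul_of_nonneg_right hexp (hnonneg Astar)

/-- Nemhauser et al.'s (1 - 1/e) guarantee for greedy maximization of a
non-negative, monotone, submodular set function under a cardinality constraint. -/
theorem pac_stmt_0 {X : Type*} [Fintype X] [DecidableEq X]
    (F : Finset X → ℝ)
    (hnonneg : ∀ A : Finset X, 0 ≤ F A)
    (hmono : ∀ A B : Finset X, A ⊆ B → F A ≤ F B)
    (hsub : ∀ A B : Finset X, A ⊆ B → ∀ i ∉ B,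
      F (insert i B) - F B ≤ F (insert i A) - F A)
    (k : ℕ) (hk : 1 ≤ k)
    (A : ℕ → Finset X) (h0 : A 0 = ∅)
    (hgreedy : ∀ m < k, ∃ i ∉ A m, A (m + 1) = insert i (A m) ∧
      ∀ j ∉ A m, F (insert j (A m)) - F (A m) ≤ F (insert i (A m)) - F (A m))
    (Astar : Finset X) (hcard : Astar.card ≤ k)
    (hopt : ∀ B : Finset X, B.card ≤ k → F B ≤ F Astar) :
    F (A k) ≥ (1 - (Real.exp 1)⁻¹) * F Astar :=
  pac_stmt_0_general F hnonneg hmono hsub k hk A hgreedy Astar hcard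
end

section
/- Let F be submodular and let A be a subset. If an element i^P satisfies F(A ∪ {i^P}) > F(A ∪ {i*}) - ε₁ where i* maximizes the marginal gain Δ_F(i|A) over i ∈ X \ A, then Δ_F(i^P|A) ≥ (1/k) · Σ_{i ∈ A* \ A} Δ_F(i|A) - ε₁ for any set A* with |A*| ≤ k. -/
open Finset

/-- With `k = 0` the left side is `0` by the `1 / 0 = 0` convention, which is why `0 ≤ D` is
assumed rather than `0 < k`. -/
theorem one_div_mul_sum_le_of_le {ι 𝕜 : Type*} [Field 𝕜] [LinearOrder 𝕜] [IsStrictOrderedRing 𝕜]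
    {s : Finset ι} {f : ι → 𝕜} {D : 𝕜} {k : ℕ} (hD : 0 ≤ D) (hf : ∀ i ∈ s, f i ≤ D)
    (hs : #s ≤ k) :
    1 / (k : 𝕜) * ∑ i ∈ s, f i ≤ D := by
  have hsum : ∑ i ∈ s, f i ≤ k * D :=
    calc ∑ i ∈ s, f i ≤ #s • D := sum_le_card_nsmul s f D hf
      _ = #s * D := nsmul_eq_mul _ _
      _ ≤ k * D := by gcongr
  rcases k.eq_zero_or_pos with rfl | hk
  · simpa using hD
  · rw [one_div_mul_eq_div, div_le_iff₀ (by exact_mod_cast hk)]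
    linarith

theorem pac_stmt_1_general {X : Type*} [DecidableEq X]
    (F : Finset X → ℝ)
    (hmono : ∀ A B : Finset X, A ⊆ B → F A ≤ F B)
    (A : Finset X) (k : ℕ)
    (istar : X)
    (hmax : ∀ j ∉ A, F (insert j A) - F A ≤ F (insert istar A) - F A)
    (iP : X) (ε₁ : ℝ)
    (hP : F (insert iP A) > F (insert istar A) - ε₁)
    (Astar : Finset X) (hcard : Astar.card ≤ k) :
    F (insert iP A) - F A ≥
      (1 / (k : ℝ)) * ∑ i ∈ Astar \ A, (F (insert i A) - F A) - ε₁ := by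
  have hgain : 0 ≤ F (insert istar A) - F A := sub_nonneg.2 (hmono _ _ (subset_insert _ _))
  have havg : 1 / (k : ℝ) * ∑ i ∈ Astar \ A, (F (insert i A) - F A) ≤
      F (insert istar A) - F A :=
    one_div_mul_sum_le_of_le hgain (fun i hi => hmax i (mem_sdiff.1 hi).2)
      ((card_le_card sdiff_subset).trans hcard)
  linarith

/-- deterministic core of Lemma 1: if `iP` is an ε₁-approximate greedy choice
(its value is within ε₁ of the exact greedy choice `istar`), then its marginal gain is at
least the average marginal gain of the elements of any set `Astar` of size at most `k`,
minus ε₁. -/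
theorem pac_stmt_1 {X : Type*} [Fintype X] [DecidableEq X]
    (F : Finset X → ℝ)
    (hmono : ∀ A B : Finset X, A ⊆ B → F A ≤ F B)
    (hsub : ∀ A B : Finset X, A ⊆ B → ∀ i ∉ B,
      F (insert i B) - F B ≤ F (insert i A) - F A)
    (A : Finset X) (k : ℕ) (hk : 1 ≤ k)
    (istar : X) (histar : istar ∉ A)
    (hmax : ∀ j ∉ A, F (insert j A) - F A ≤ F (insert istar A) - F A)
    (iP : X) (ε₁ : ℝ)
    (hP : F (insert iP A) > F (insert istar A) - ε₁)
    (Astar : Finset X) (hcard : Astar.card ≤ k) :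
    F (insert iP A) - F A ≥
      (1 / (k : ℝ)) * ∑ i ∈ Astar \ A, (F (insert i A) - F A) - ε₁ :=
  pac_stmt_1_general F hmono A k istar hmax iP ε₁ hP Astar hcard
end

section
/- Let F be monotone and submodular, A* a set of size at most k, and A_m any set. Then F(A_m) + Σ_{i ∈ A* \ A_m} Δ_F(i|A_m) ≥ F(A*), where Δ_F(i|A) = F(A ∪ {i}) - F(A). -/
open Finset

theorem apply_union_le_add_sum_marginal_of_disjoint {X : Type*} [DecidableEq X]
    (F : Finset X → ℝ)
    (hsub : ∀ A B : Finset X, A ⊆ B → ∀ i ∉ B,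
      F (insert i B) - F B ≤ F (insert i A) - F A)
    (A T : Finset X) (hAT : Disjoint A T) :
    F (A ∪ T) ≤ F A + ∑ i ∈ T, (F (insert i A) - F A) := by
  induction T using Finset.induction_on with
  | empty => simp
  | @insert a T haT ih =>
    rw [disjoint_insert_right] at hAT
    obtain ⟨haA, hAT⟩ := hAT
    have haAT : a ∉ A ∪ T := by simp [haA, haT]
    have hstep := hsub A (A ∪ T) subset_union_left a haAT
    rw [union_insert, sum_insert haT]
    linarith [ih hAT]

theorem apply_union_le_add_sum_marginal {X : Type*} [DecidableEq X]
    (F : Finset X → ℝ)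
    (hsub : ∀ A B : Finset X, A ⊆ B → ∀ i ∉ B,
      F (insert i B) - F B ≤ F (insert i A) - F A)
    (A S : Finset X) :
    F (A ∪ S) ≤ F A + ∑ i ∈ S \ A, (F (insert i A) - F A) := by
  rw [← union_sdiff_self_eq_union]
  exact apply_union_le_add_sum_marginal_of_disjoint F hsub A (S \ A) disjoint_sdiff

theorem pac_stmt_2_general {X : Type*} [DecidableEq X]
    (F : Finset X → ℝ)
    (hmono : ∀ A B : Finset X, A ⊆ B → F A ≤ F B)
    (hsub : ∀ A B : Finset X, A ⊆ B → ∀ i ∉ B,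
      F (insert i B) - F B ≤ F (insert i A) - F A)
    (Astar : Finset X)
    (Am : Finset X) :
    F Am + ∑ i ∈ Astar \ Am, (F (insert i Am) - F Am) ≥ F Astar :=
  calc F Astar ≤ F (Am ∪ Astar) := hmono _ _ subset_union_right
    _ ≤ _ := apply_union_le_add_sum_marginal F hsub Am Astar

/-- for monotone submodular `F`, `F(A_m)` plus the sum of marginal gains of
the elements of `A* \ A_m` with respect to `A_m` is at least `F(A*)`. -/
theorem pac_stmt_2 {X : Type*} [Fintype X] [DecidableEq X]
    (F : Finset X → ℝ)
    (hmono : ∀ A B : Finset X, A ⊆ B → F A ≤ F B)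
    (hsub : ∀ A B : Finset X, A ⊆ B → ∀ i ∉ B,
      F (insert i B) - F B ≤ F (insert i A) - F A)
    (k : ℕ) (Astar : Finset X) (hcard : Astar.card ≤ k)
    (Am : Finset X) :
    F Am + ∑ i ∈ Astar \ Am, (F (insert i Am) - F Am) ≥ F Astar :=
  pac_stmt_2_general F hmono hsub Astar Am
end

section
/- Suppose a sequence of sets A_0 = ∅ ⊆ A_1 ⊆ ... ⊆ A_k (with A_{m+1} = A_m ∪ {i_{m+1}}) satisfies, for every m < k, F(A_{m+1}) - F(A_m) ≥ (1/k)·[F(A*) - F(A_m)] - ε₁, and F(∅) ≥ 0. Then F(A_k) ≥ (1 - (1 - 1/k)^k)·F(A*) - k·ε₁ ≥ (1 - 1/e)·F(A*) - k·ε₁. -/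
/-! Writing `q = 1 - δ`, the per-step hypothesis reads `u (m+1) ≥ q u m + (1 - q) c - ε`, so the
shortfall `c - u m` contracts by the factor `q` per step up to an additive `ε`. Unrolling from
`u 0 ≥ 0` gives `u m ≥ (1 - q^m) c - m ε`, and `(1 - 1/k)^k ≤ e⁻¹` turns this into the
`1 - 1/e` bound. -/

theorem le_of_forall_step_gain {u : ℕ → ℝ} {c δ ε : ℝ} {k : ℕ}
    (hδ₀ : 0 ≤ δ) (hδ₁ : δ ≤ 1) (hε : 0 ≤ ε) (hu₀ : 0 ≤ u 0)
    (hstep : ∀ m < k, u (m + 1) - u m ≥ δ * (c - u m) - ε) :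
    ∀ m ≤ k, (1 - (1 - δ) ^ m) * c - m * ε ≤ u m := by
  intro m hm
  induction m with
  | zero => simpa using hu₀
  | succ n ih =>
    have hn : n < k := hm
    have contract : (1 - δ) * ((1 - (1 - δ) ^ n) * c - n * ε) ≤ (1 - δ) * u n :=
      mul_le_mul_of_nonneg_left (ih hn.le) (by linarith)
    have hnε : 0 ≤ δ * (n * ε) := by positivity
    have gain := hstep n hn
    push_cast
    linear_combination contract + gain + hnε

theorem one_sub_inv_pow_le_exp_neg_one {k : ℕ} (hk : 1 ≤ k) :
    (1 - 1 / (k : ℝ)) ^ k ≤ (Real.exp 1)⁻¹ := by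
  rw [← Real.exp_neg]
  exact Real.one_sub_div_pow_le_exp_neg (by exact_mod_cast hk)

theorem pac_stmt_3_general {X : Type*}
    (F : Finset X → ℝ) (Astar : Finset X)
    (k : ℕ) (hk : 1 ≤ k) (ε₁ : ℝ) (hε : 0 ≤ ε₁)
    (A : ℕ → Finset X) (h0 : A 0 = ∅)
    (hstep : ∀ m < k,
      F (A (m + 1)) - F (A m) ≥ (1 / (k : ℝ)) * (F Astar - F (A m)) - ε₁)
    (hF0 : 0 ≤ F ∅) (hFstar : 0 ≤ F Astar) :
    F (A k) ≥ (1 - (1 - 1 / (k : ℝ)) ^ k) * F Astar - (k : ℝ) * ε₁ ∧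
      (1 - (1 - 1 / (k : ℝ)) ^ k) * F Astar - (k : ℝ) * ε₁ ≥
        (1 - (Real.exp 1)⁻¹) * F Astar - (k : ℝ) * ε₁ := by
  have hk_real : (1 : ℝ) ≤ k := by exact_mod_cast hk
  have hδ₁ : 1 / (k : ℝ) ≤ 1 := by rw [div_le_one (by linarith)]; exact hk_real
  refine ⟨le_of_forall_step_gain (by positivity) hδ₁ hε (by rwa [h0]) hstep k le_rfl, ?_⟩
  have := mul_le_mul_of_nonneg_right
    (sub_le_sub_left (one_sub_inv_pow_le_exp_neg_one hk) 1) hFstar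
  linarith

/-- the inductive argument of Theorem 2: if each step improves `F` by at least
`(1/k)[F(A*) - F(A_m)] - ε₁`, then `F(A_k) ≥ (1 - (1 - 1/k)^k) F(A*) - k ε₁
≥ (1 - 1/e) F(A*) - k ε₁`. -/
theorem pac_stmt_3 {X : Type*} [Fintype X] [DecidableEq X]
    (F : Finset X → ℝ) (Astar : Finset X)
    (k : ℕ) (hk : 1 ≤ k) (ε₁ : ℝ) (hε : 0 ≤ ε₁)
    (A : ℕ → Finset X) (h0 : A 0 = ∅)
    (hchain : ∀ m < k, ∃ i, A (m + 1) = insert i (A m))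
    (hstep : ∀ m < k,
      F (A (m + 1)) - F (A m) ≥ (1 / (k : ℝ)) * (F Astar - F (A m)) - ε₁)
    (hF0 : 0 ≤ F ∅) (hFstar : 0 ≤ F Astar) :
    F (A k) ≥ (1 - (1 - 1 / (k : ℝ)) ^ k) * F Astar - (k : ℝ) * ε₁ ∧
      (1 - (1 - 1 / (k : ℝ)) ^ k) * F Astar - (k : ℝ) * ε₁ ≥
        (1 - (Real.exp 1)⁻¹) * F Astar - (k : ℝ) * ε₁ :=
  pac_stmt_3_general F Astar k hk ε₁ hε A h0 hstep hF0 hFstar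
end

section
/- Lower bound on plug-in entropy estimator bias: for a distribution b with support size ψ on a finite set, and M i.i.d. samples, E[H(b̂)] - H(b) ≥ -log(1 + (ψ - 1)/M). -/
/-!
Since `E b̂ = b`, the expected value of `∑ b̂ log b` is `-H(b)`, so the bias `E H(b̂) - H(b)`
equals `-E KL(b̂ ‖ b)`. The tangent line `log x ≤ log T + x / T - 1` gives, for every `T > 0`,
`KL(p ‖ q) ≤ log T + (∑ p² / q) / T - 1`. Averaging over the sample and choosing
`T = E ∑ b̂² / b = 1 + (ψ - 1) / M`, which follows from the binomial second moments
`E b̂ₛ² = (bₛ + (M - 1) bₛ²) / M`, yields `E KL(b̂ ‖ b) ≤ log T`.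
-/

open Finset

/-- Shannon entropy (natural log) of a pmf on a finite set. -/
noncomputable def shannonEntropy {S : Type*} [Fintype S] (p : S → ℝ) : ℝ :=
  - ∑ s, p s * Real.log (p s)

/-- Empirical (maximum likelihood) distribution of `M` samples `ω : Fin M → S`. -/
noncomputable def empDist {S : Type*} [Fintype S] [DecidableEq S] {M : ℕ}
    (ω : Fin M → S) (s : S) : ℝ :=
  (1 / (M : ℝ)) * ∑ j, if ω j = s then 1 else 0

open Real

section IidExpect

variable {S : Type*} [Fintype S] {M : ℕ}

noncomputable def iidExpect (b : S → ℝ) (f : (Fin M → S) → ℝ) : ℝ :=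
  ∑ ω, (∏ j, b (ω j)) * f ω

variable (b : S → ℝ)

lemma iidExpect_add (f g : (Fin M → S) → ℝ) :
    iidExpect b (fun ω => f ω + g ω) = iidExpect b f + iidExpect b g := by
  simp only [iidExpect, mul_add, sum_add_distrib]

lemma iidExpect_neg (f : (Fin M → S) → ℝ) :
    iidExpect b (fun ω => -f ω) = -iidExpect b f := by
  simp only [iidExpect, mul_neg, sum_neg_distrib]

lemma iidExpect_sub (f g : (Fin M → S) → ℝ) :
    iidExpect b (fun ω => f ω - g ω) = iidExpect b f - iidExpect b g := by
  simp only [iidExpect, mul_sub, sum_sub_distrib]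

lemma iidExpect_const_mul (c : ℝ) (f : (Fin M → S) → ℝ) :
    iidExpect b (fun ω => c * f ω) = c * iidExpect b f := by
  simp only [iidExpect, mul_sum, mul_left_comm]

lemma iidExpect_div_const (f : (Fin M → S) → ℝ) (c : ℝ) :
    iidExpect b (fun ω => f ω / c) = iidExpect b f / c := by
  simp only [div_eq_inv_mul, iidExpect_const_mul]

lemma iidExpect_sum {ι : Type*} (t : Finset ι) (f : ι → (Fin M → S) → ℝ) :
    iidExpect b (fun ω => ∑ i ∈ t, f i ω) = ∑ i ∈ t, iidExpect b (f i) := by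
  simp only [iidExpect, mul_sum]
  exact sum_comm

lemma iidExpect_prod (g : Fin M → S → ℝ) :
    iidExpect b (fun ω => ∏ j, g j (ω j)) = ∏ j, ∑ x, b x * g j x := by
  simp only [iidExpect, ← prod_mul_distrib]
  exact (Fintype.prod_sum fun j x => b x * g j x).symm

variable {b}

lemma iidExpect_const (hb1 : ∑ s, b s = 1) (c : ℝ) :
    iidExpect b (fun _ : Fin M → S => c) = c := by
  have h := iidExpect_prod (M := M) b fun _ _ => 1
  simp only [iidExpect, prod_const_one, mul_one, hb1] at h
  simp only [iidExpect, ← sum_mul, h, one_mul]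

lemma iidExpect_mono (hb : ∀ s, 0 ≤ b s) {f g : (Fin M → S) → ℝ}
    (hfg : ∀ ω, (∀ j, 0 < b (ω j)) → f ω ≤ g ω) : iidExpect b f ≤ iidExpect b g := by
  refine sum_le_sum fun ω _ => ?_
  by_cases hω : ∀ j, 0 < b (ω j)
  · exact mul_le_mul_of_nonneg_left (hfg ω hω) (prod_nonneg fun j _ => hb (ω j))
  · obtain ⟨j, hj⟩ := not_forall.mp hω
    have : ∏ j, b (ω j) = 0 := prod_eq_zero (mem_univ j) (le_antisymm (not_lt.mp hj) (hb _))
    simp [this]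

lemma iidExpect_prod_indicator [DecidableEq S] (hb1 : ∑ s, b s = 1) (A : Finset (Fin M)) (s : S) :
    iidExpect b (fun ω => ∏ j ∈ A, if ω j = s then 1 else 0) = b s ^ #A := by
  have h := iidExpect_prod b fun j x => if j ∈ A then (if x = s then 1 else 0) else 1
  simp only [prod_ite_mem, univ_inter] at h
  have hfactor (j : Fin M) :
      ∑ x, b x * (if j ∈ A then (if x = s then 1 else 0) else 1) = if j ∈ A then b s else 1 := by
    split_ifs <;> simp [hb1]
  rw [h, Fintype.prod_congr _ _ hfactor, prod_ite_mem, univ_inter, prod_const]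

end IidExpect

section EmpDist

variable {S : Type*} [Fintype S] [DecidableEq S] {M : ℕ}

lemma empDist_nonneg (ω : Fin M → S) (s : S) : 0 ≤ empDist ω s := by
  unfold empDist
  positivity

lemma sum_empDist (hM : M ≠ 0) (ω : Fin M → S) : ∑ s, empDist ω s = 1 := by
  simp only [empDist, ← mul_sum]
  rw [sum_comm]
  simp [hM]

lemma empDist_eq_zero {ω : Fin M → S} {s : S} (hω : ∀ j, ω j ≠ s) : empDist ω s = 0 := by
  simp [empDist, hω]

variable {b : S → ℝ}

lemma pos_of_empDist_pos {ω : Fin M → S} (hω : ∀ j, 0 < b (ω j)) {s : S} (hs : 0 < empDist ω s) :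
    0 < b s := by
  by_contra h
  exact hs.ne' (empDist_eq_zero fun j hj => h (hj ▸ hω j))

lemma iidExpect_empDist (hb1 : ∑ s, b s = 1) (hM : M ≠ 0) (s : S) :
    iidExpect b (fun ω : Fin M → S => empDist ω s) = b s := by
  have h (j : Fin M) := iidExpect_prod_indicator hb1 {j} s
  simp only [prod_singleton, card_singleton, pow_one] at h
  simp only [empDist, iidExpect_const_mul, iidExpect_sum, h, sum_const, card_univ,
    Fintype.card_fin, nsmul_eq_mul]
  field_simp

lemma iidExpect_indicator_mul_indicator (hb1 : ∑ s, b s = 1) (j k : Fin M) (s : S) :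
    iidExpect b (fun ω => (if ω j = s then 1 else 0) * (if ω k = s then 1 else 0)) =
      if j = k then b s else b s ^ 2 := by
  split_ifs with hjk
  · subst hjk
    rw [← pow_one (b s), ← card_singleton j, ← iidExpect_prod_indicator hb1 {j} s]
    congr 1 with ω
    split_ifs <;> simp [*]
  · simpa [prod_pair hjk, card_pair hjk] using iidExpect_prod_indicator hb1 {j, k} s

lemma iidExpect_empDist_sq (hb1 : ∑ s, b s = 1) (s : S) :
    iidExpect b (fun ω : Fin M → S => empDist ω s ^ 2) = (b s + (M - 1) * b s ^ 2) / M := by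
  have hsq (ω : Fin M → S) : empDist ω s ^ 2 = (1 / M) ^ 2 *
      ∑ j, ∑ k, (if ω j = s then (1 : ℝ) else 0) * (if ω k = s then 1 else 0) := by
    rw [empDist, mul_pow, sq (∑ j, _), sum_mul_sum]
  have hrow (j : Fin M) :
      ∑ k, (if j = k then b s else b s ^ 2) = b s + (M - 1) * b s ^ 2 := by
    have hsplit (k : Fin M) :
        (if j = k then b s else b s ^ 2) = b s ^ 2 + if j = k then b s - b s ^ 2 else 0 := by
      split_ifs <;> ring
    simp only [hsplit, sum_add_distrib, sum_ite_eq, mem_univ, if_true, sum_const, card_univ,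
      Fintype.card_fin, nsmul_eq_mul]
    ring
  simp only [hsq, iidExpect_const_mul, iidExpect_sum, iidExpect_indicator_mul_indicator hb1, hrow,
    sum_const, card_univ, Fintype.card_fin, nsmul_eq_mul]
  rcases eq_or_ne (M : ℝ) 0 with hM | hM
  · simp [hM]
  · field_simp

end EmpDist

section RelEntropy

variable {S : Type*} [Fintype S]

noncomputable def relEntropy (p q : S → ℝ) : ℝ :=
  ∑ s, p s * (log (p s) - log (q s))

lemma relEntropy_eq (p q : S → ℝ) :
    relEntropy p q = -shannonEntropy p - ∑ s, p s * log (q s) := by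
  simp only [relEntropy, shannonEntropy, mul_sub, sum_sub_distrib, neg_neg]

lemma log_le_log_add_div_sub_one {x T : ℝ} (hx : 0 < x) (hT : 0 < T) :
    log x ≤ log T + x / T - 1 := by
  have h := log_le_sub_one_of_pos (div_pos hx hT)
  rw [log_div hx.ne' hT.ne'] at h
  linarith

lemma relEntropy_le_log_add_div_sub_one {p q : S → ℝ} (hp : ∀ s, 0 ≤ p s) (hp1 : ∑ s, p s = 1)
    (hpq : ∀ s, 0 < p s → 0 < q s) {T : ℝ} (hT : 0 < T) :
    relEntropy p q ≤ log T + (∑ s, p s ^ 2 / q s) / T - 1 := by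
  have hterm (s : S) :
      p s * (log (p s) - log (q s)) ≤ p s * log T + p s ^ 2 / q s / T - p s := by
    rcases (hp s).eq_or_lt with hzero | hpos
    · simp [← hzero]
    have hqpos := hpq s hpos
    have hlog := log_le_log_add_div_sub_one (div_pos hpos hqpos) hT
    rw [log_div hpos.ne' hqpos.ne'] at hlog
    calc p s * (log (p s) - log (q s)) ≤ p s * (log T + p s / q s / T - 1) :=
          mul_le_mul_of_nonneg_left hlog hpos.le
      _ = p s * log T + p s ^ 2 / q s / T - p s := by ring
  calc relEntropy p q ≤ ∑ s, (p s * log T + p s ^ 2 / q s / T - p s) :=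
        sum_le_sum fun s _ => hterm s
    _ = log T + (∑ s, p s ^ 2 / q s) / T - 1 := by
        rw [sum_sub_distrib, sum_add_distrib, ← sum_mul, ← sum_div, hp1]
        ring

end RelEntropy

section Bias

variable {S : Type*} [Fintype S] {b : S → ℝ}

lemma one_le_card_filter_pos (hb1 : ∑ s, b s = 1) : 1 ≤ #{s | 0 < b s} := by
  obtain ⟨s, -, hs⟩ := exists_lt_of_sum_lt (f := 0) (g := b) (s := univ) (by simp [hb1])
  exact card_pos.mpr ⟨s, by simpa using hs⟩

variable [DecidableEq S] {M : ℕ}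

lemma iidExpect_shannonEntropy_empDist_sub_eq_neg (hb1 : ∑ s, b s = 1) (hM : M ≠ 0) :
    iidExpect b (fun ω : Fin M → S => shannonEntropy (empDist ω)) - shannonEntropy b =
      -iidExpect b (fun ω : Fin M → S => relEntropy (empDist ω) b) := by
  simp only [relEntropy_eq, iidExpect_sub, iidExpect_sum, iidExpect_const_mul, mul_comm _ (log _),
    iidExpect_empDist hb1 hM, iidExpect_neg]
  simp only [shannonEntropy, mul_comm (log _)]
  ring

lemma iidExpect_sum_empDist_sq_div (hb : ∀ s, 0 ≤ b s) (hb1 : ∑ s, b s = 1) (hM : M ≠ 0) :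
    iidExpect b (fun ω : Fin M → S => ∑ s, empDist ω s ^ 2 / b s) =
      1 + ((#{s | 0 < b s} : ℝ) - 1) / M := by
  have hterm (s : S) : (b s + (M - 1) * b s ^ 2) / M / b s =
      (if 0 < b s then 1 else 0) / M + (M - 1) / M * b s := by
    rcases (hb s).eq_or_lt with hzero | hpos
    · simp [← hzero]
    · simp only [hpos, if_true]
      field_simp
  simp only [iidExpect_sum, iidExpect_div_const, iidExpect_empDist_sq hb1, hterm, sum_add_distrib,
    ← sum_div, ← mul_sum, hb1, natCast_card_filter]
  field_simp
  ring

end Bias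

/-- Paninski's lower bound on the bias of the plug-in entropy estimator:
`E[H(b̂)] - H(b) ≥ -log(1 + (ψ - 1)/M)` where `ψ` is the support size of `b`. -/
theorem pac_stmt_7 {S : Type*} [Fintype S] [DecidableEq S]
    (b : S → ℝ) (hb : ∀ s, 0 ≤ b s) (hb1 : ∑ s, b s = 1)
    (M : ℕ) (hM : 1 ≤ M)
    (ψ : ℕ) (hψ : ψ = (Finset.univ.filter fun s => 0 < b s).card) :
    ∑ ω : Fin M → S, (∏ j, b (ω j)) * shannonEntropy (empDist ω) - shannonEntropy b ≥
      - Real.log (1 + ((ψ : ℝ) - 1) / (M : ℝ)) := by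
  have hM0 : M ≠ 0 := by omega
  set T : ℝ := 1 + ((ψ : ℝ) - 1) / M
  have hχ : iidExpect b (fun ω : Fin M → S => ∑ s, empDist ω s ^ 2 / b s) = T := by
    rw [iidExpect_sum_empDist_sq_div hb hb1 hM0, ← hψ]
  have hT : 0 < T := by
    have hψ1 : (1 : ℝ) ≤ ψ := by exact_mod_cast hψ ▸ one_le_card_filter_pos hb1
    have : 0 ≤ ((ψ : ℝ) - 1) / M := div_nonneg (by linarith) (Nat.cast_nonneg M)
    linarith
  change iidExpect b _ - _ ≥ _
  rw [iidExpect_shannonEntropy_empDist_sub_eq_neg hb1 hM0, ge_iff_le, neg_le_neg_iff]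
  calc iidExpect b (fun ω => relEntropy (empDist ω) b)
      ≤ iidExpect b (fun ω : Fin M → S => log T + (∑ s, empDist ω s ^ 2 / b s) / T - 1) :=
        iidExpect_mono hb fun ω hω => relEntropy_le_log_add_div_sub_one (empDist_nonneg ω)
          (sum_empDist hM0 ω) (fun _ => pos_of_empDist_pos hω) hT
    _ = log T := by
        rw [iidExpect_sub, iidExpect_add, iidExpect_div_const, hχ, iidExpect_const hb1,
          iidExpect_const hb1, div_self hT.ne']
        ring
end

section
/- Robustness of greedy maximization to per-step noise: if F is non-negative, monotone, and submodular, and at each of k steps the algorithm selects an element i' with Δ_F(i'|A) ≥ max_{i ∈ X \ A} Δ_F(i|A) - ε₁, then the resulting set A' satisfies F(A') ≥ (1 - 1/e)·F(A*) - k·ε₁, where A* is optimal among sets of size at most k. -/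
/-!
After `m` greedy steps, submodularity bounds the gap `F S - F (A m)` to any set `S` of size
at most `k` by `k` times the best marginal gain plus `k ε₁`; since the chosen gain is within
`ε₁` of the best one, each step shrinks the gap by a factor `1 - 1/k` up to an additive `ε₁`.
Unrolling over `k` steps and using `(1 - 1/k)^k ≤ e⁻¹` gives the bound.
-/

open Finset

section Marginal

variable {X : Type*} [DecidableEq X] {F : Finset X → ℝ}

/-- The marginal gain `Δ_F(i | A)`. -/
def marginal (F : Finset X → ℝ) (i : X) (A : Finset X) : ℝ := F (insert i A) - F A

lemma marginal_nonneg (hmono : ∀ A B : Finset X, A ⊆ B → F A ≤ F B) (i : X) (A : Finset X) :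
    0 ≤ marginal F i A :=
  sub_nonneg.2 (hmono _ _ (subset_insert i A))

lemma marginal_of_mem {i : X} {A : Finset X} (hi : i ∈ A) : marginal F i A = 0 := by
  rw [marginal, insert_eq_of_mem hi, sub_self]

lemma union_sub_le_sum_marginal (hmono : ∀ A B : Finset X, A ⊆ B → F A ≤ F B)
    (hsub : ∀ A B : Finset X, A ⊆ B → ∀ i ∉ B, marginal F i B ≤ marginal F i A)
    (A S : Finset X) :
    F (A ∪ S) - F A ≤ ∑ j ∈ S, marginal F j A := by
  induction S using Finset.induction_on with
  | empty => simp
  | @insert j S hjS ih =>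
    rw [sum_insert hjS, union_insert]
    have hstep : F (insert j (A ∪ S)) - F (A ∪ S) ≤ marginal F j A := by
      by_cases hj : j ∈ A ∪ S
      · rw [insert_eq_of_mem hj, sub_self]; exact marginal_nonneg hmono j A
      · exact hsub A (A ∪ S) subset_union_left j hj
    linarith

lemma sub_le_card_mul_approx_greedy_gain {ε : ℝ} (hε : 0 ≤ ε)
    (hmono : ∀ A B : Finset X, A ⊆ B → F A ≤ F B)
    (hsub : ∀ A B : Finset X, A ⊆ B → ∀ i ∉ B, marginal F i B ≤ marginal F i A)
    {A : Finset X} {i : X} (hgreedy : ∀ j ∉ A, marginal F i A ≥ marginal F j A - ε)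
    (S : Finset X) :
    F S - F A ≤ #S * (marginal F i A + ε) :=
  calc F S - F A ≤ F (A ∪ S) - F A := by linarith [hmono S (A ∪ S) subset_union_right]
    _ ≤ ∑ j ∈ S, marginal F j A := union_sub_le_sum_marginal hmono hsub A S
    _ ≤ ∑ _j ∈ S, (marginal F i A + ε) := by
      refine sum_le_sum fun j _ => ?_
      by_cases hj : j ∈ A
      · rw [marginal_of_mem hj]; linarith [marginal_nonneg hmono i A]
      · linarith [hgreedy j hj]
    _ = #S * (marginal F i A + ε) := by rw [sum_const, nsmul_eq_mul]

lemma gap_insert_le {k : ℕ} (hk : 1 ≤ k) {ε : ℝ} (hε : 0 ≤ ε)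
    (hmono : ∀ A B : Finset X, A ⊆ B → F A ≤ F B)
    (hsub : ∀ A B : Finset X, A ⊆ B → ∀ i ∉ B, marginal F i B ≤ marginal F i A)
    {A S : Finset X} (hS : #S ≤ k) {i : X}
    (hgreedy : ∀ j ∉ A, marginal F i A ≥ marginal F j A - ε) :
    F S - F (insert i A) ≤ (1 - 1 / k) * (F S - F A) + ε := by
  have hk0 : (0 : ℝ) < k := by exact_mod_cast hk
  have hgap : F S - F A ≤ k * (marginal F i A + ε) := by
    refine (sub_le_card_mul_approx_greedy_gain hε hmono hsub hgreedy S).trans ?_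
    gcongr
    linarith [marginal_nonneg hmono i A]
  have hfrac : (F S - F A) / k ≤ F (insert i A) - F A + ε := by rwa [div_le_iff₀' hk0]
  have hexpand : (1 - 1 / (k : ℝ)) * (F S - F A) = (F S - F A) - (F S - F A) / k := by ring
  rw [hexpand]
  linarith

end Marginal

lemma le_pow_mul_add_of_le_mul_add {g : ℕ → ℝ} {q ε : ℝ} {n : ℕ}
    (hq0 : 0 ≤ q) (hq1 : q ≤ 1) (hε : 0 ≤ ε)
    (h : ∀ m < n, g (m + 1) ≤ q * g m + ε) :
    g n ≤ q ^ n * g 0 + n * ε := by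
  induction n with
  | zero => simp
  | succ n ih =>
    have ih' := ih fun m hm => h m (Nat.lt_succ_of_lt hm)
    have hdecay : q * (n * ε) ≤ n * ε := mul_le_of_le_one_left (by positivity) hq1
    calc g (n + 1) ≤ q * g n + ε := h n (Nat.lt_succ_self n)
      _ ≤ q * (q ^ n * g 0 + n * ε) + ε := by gcongr
      _ ≤ q ^ (n + 1) * g 0 + (n + 1 : ℕ) * ε := by push_cast; rw [pow_succ]; linarith

theorem pac_stmt_12_general {X : Type*} [DecidableEq X]
    (F : Finset X → ℝ)
    (hnonneg : ∀ A : Finset X, 0 ≤ F A)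
    (hmono : ∀ A B : Finset X, A ⊆ B → F A ≤ F B)
    (hsub : ∀ A B : Finset X, A ⊆ B → ∀ i ∉ B,
      F (insert i B) - F B ≤ F (insert i A) - F A)
    (k : ℕ) (hk : 1 ≤ k) (ε₁ : ℝ) (hε : 0 ≤ ε₁)
    (A : ℕ → Finset X) (h0 : A 0 = ∅)
    (hstep : ∀ m < k, ∃ i ∉ A m, A (m + 1) = insert i (A m) ∧
      ∀ j ∉ A m, F (insert i (A m)) - F (A m) ≥
        (F (insert j (A m)) - F (A m)) - ε₁)
    (Astar : Finset X) (hcard : Astar.card ≤ k) :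
    F (A k) ≥ (1 - (Real.exp 1)⁻¹) * F Astar - (k : ℝ) * ε₁ := by
  have hq0 : 0 ≤ 1 - 1 / (k : ℝ) := by
    rw [sub_nonneg, div_le_one (by positivity)]; exact_mod_cast hk
  have hgap : F Astar - F (A k) ≤ (1 - 1 / (k : ℝ)) ^ k * (F Astar - F (A 0)) + k * ε₁ := by
    refine le_pow_mul_add_of_le_mul_add (g := fun m => F Astar - F (A m)) hq0 (by simp) hε
      fun m hm => ?_
    obtain ⟨i, -, hA, hgreedy⟩ := hstep m hm
    rw [hA]
    exact gap_insert_le hk hε hmono hsub hcard hgreedy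
  have hpow : (1 - 1 / (k : ℝ)) ^ k ≤ (Real.exp 1)⁻¹ := by
    rw [← Real.exp_neg]; exact Real.one_sub_div_pow_le_exp_neg (by exact_mod_cast hk)
  have hgap0 : 0 ≤ F Astar - F (A 0) := sub_nonneg.2 (hmono _ _ (h0 ▸ empty_subset _))
  have hgap0_le : F Astar - F (A 0) ≤ F Astar := by linarith [hnonneg (A 0)]
  have hdecay : (1 - 1 / (k : ℝ)) ^ k * (F Astar - F (A 0)) ≤ (Real.exp 1)⁻¹ * F Astar :=
    mul_le_mul hpow hgap0_le hgap0 (by positivity)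
  linarith

/-- robustness of greedy maximization to per-step noise: `k` successive
ε₁-approximately-greedy insertions for a non-negative monotone submodular `F` yield a set
`A'` with `F(A') ≥ (1 - 1/e) F(A*) - k ε₁`. -/
theorem pac_stmt_12 {X : Type*} [Fintype X] [DecidableEq X]
    (F : Finset X → ℝ)
    (hnonneg : ∀ A : Finset X, 0 ≤ F A)
    (hmono : ∀ A B : Finset X, A ⊆ B → F A ≤ F B)
    (hsub : ∀ A B : Finset X, A ⊆ B → ∀ i ∉ B,
      F (insert i B) - F B ≤ F (insert i A) - F A)
    (k : ℕ) (hk : 1 ≤ k) (ε₁ : ℝ) (hε : 0 ≤ ε₁)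
    (A : ℕ → Finset X) (h0 : A 0 = ∅)
    (hstep : ∀ m < k, ∃ i ∉ A m, A (m + 1) = insert i (A m) ∧
      ∀ j ∉ A m, F (insert i (A m)) - F (A m) ≥
        (F (insert j (A m)) - F (A m)) - ε₁)
    (Astar : Finset X) (hcard : Astar.card ≤ k)
    (hopt : ∀ B : Finset X, B.card ≤ k → F B ≤ F Astar) :
    F (A k) ≥ (1 - (Real.exp 1)⁻¹) * F Astar - (k : ℝ) * ε₁ :=
  pac_stmt_12_general F hnonneg hmono hsub k hk ε₁ hε A h0 hstep Astar hcard
end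

section
/- If the observations Z_1, ..., Z_n are conditionally independent given the hidden state S, then the set function F(A) = H(S) - H(S | Z_A) (information gain) is submodular in A. -/
open Finset

/-- Distribution (pmf) of a random variable `X` on a finite probability space with mass
function `p`. -/
noncomputable def rvDist {Ω α : Type*} [Fintype Ω] [DecidableEq α]
    (p : Ω → ℝ) (X : Ω → α) (x : α) : ℝ :=
  ∑ ω, if X ω = x then p ω else 0

/-- Shannon entropy (natural log) of a random variable on a finite probability space. -/
noncomputable def rvEntropy {Ω α : Type*} [Fintype Ω] [Fintype α] [DecidableEq α]
    (p : Ω → ℝ) (X : Ω → α) : ℝ :=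
  - ∑ x, rvDist p X x * Real.log (rvDist p X x)

/-- Conditional Shannon entropy `H(X|Y) = Σ_y Pr(Y = y) H(X | Y = y)
= -Σ_{x,y} Pr(x,y) log (Pr(x,y) / Pr(y))` on a finite probability space. -/
noncomputable def rvCondEntropy {Ω α β : Type*} [Fintype Ω]
    [Fintype α] [DecidableEq α] [Fintype β] [DecidableEq β]
    (p : Ω → ℝ) (X : Ω → α) (Y : Ω → β) : ℝ :=
  - ∑ x, ∑ y,
      rvDist p (fun ω => (X ω, Y ω)) (x, y) *
        Real.log (rvDist p (fun ω => (X ω, Y ω)) (x, y) / rvDist p Y y)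

/-!
Conditional independence gives `H(S|Z_A) - H(S|Z_{A ∪ {i}}) = H(Z_i|Z_A) - H(Z_i|S)`: both sides
are the conditional mutual information `I(S; Z_i | Z_A)`, and `H(Z_i | S, Z_A) = H(Z_i | S)`.
The marginal gain of `i` is therefore `H(Z_i|Z_A) - H(Z_i|S)`, which can only shrink as `A` grows,
because conditioning on more observations does not increase entropy (Gibbs' inequality).
-/

section Entropy

variable {Ω α β γ : Type*} [Fintype Ω] [DecidableEq α] [DecidableEq β]

lemma rvDist_nonneg {p : Ω → ℝ} (hp : ∀ ω, 0 ≤ p ω) (X : Ω → α) (x : α) :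
    0 ≤ rvDist p X x :=
  sum_nonneg fun ω _ => by split_ifs <;> simp [hp ω]

lemma le_rvDist_self {p : Ω → ℝ} (hp : ∀ ω, 0 ≤ p ω) (X : Ω → α) (ω : Ω) :
    p ω ≤ rvDist p X (X ω) := by
  simpa [rvDist] using single_le_sum (f := fun ω' => if X ω' = X ω then p ω' else 0)
    (fun ω' _ => by split_ifs <;> simp [hp ω']) (mem_univ ω)

lemma rvDist_self_pos {p : Ω → ℝ} (hp : ∀ ω, 0 ≤ p ω) {ω : Ω} (hω : 0 < p ω) (X : Ω → α) :
    0 < rvDist p X (X ω) :=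
  hω.trans_le (le_rvDist_self hp X ω)

lemma rvDist_congr_self (p : Ω → ℝ) {X : Ω → α} {Y : Ω → β} {ω : Ω}
    (h : ∀ ω', X ω' = X ω ↔ Y ω' = Y ω) : rvDist p X (X ω) = rvDist p Y (Y ω) :=
  sum_congr rfl fun ω' _ => if_congr (h ω') rfl rfl

variable [Fintype α]

lemma sum_rvDist_mul (p : Ω → ℝ) (X : Ω → α) (f : α → ℝ) :
    ∑ x, rvDist p X x * f x = ∑ ω, p ω * f (X ω) := by
  simp only [rvDist, sum_mul, ite_mul, zero_mul]
  rw [sum_comm]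
  exact sum_congr rfl fun ω _ => by rw [sum_ite_eq]; simp

lemma sum_rvDist (p : Ω → ℝ) (X : Ω → α) : ∑ x, rvDist p X x = ∑ ω, p ω := by
  simpa using sum_rvDist_mul p X 1

lemma sum_rvDist_prod_left (p : Ω → ℝ) (X : Ω → α) (Y : Ω → β) (y : β) :
    ∑ x, rvDist p (fun ω => (X ω, Y ω)) (x, y) = rvDist p Y y := by
  simp only [rvDist, Prod.mk.injEq]
  rw [sum_comm]
  exact sum_congr rfl fun ω _ => by simp [ite_and]

lemma sum_rvDist_prod_right (p : Ω → ℝ) (X : Ω → β) (Y : Ω → α) (x : β) :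
    ∑ y, rvDist p (fun ω => (X ω, Y ω)) (x, y) = rvDist p X x := by
  simp only [rvDist, Prod.mk.injEq]
  rw [sum_comm]
  exact sum_congr rfl fun ω _ => by simp [ite_and]

variable [Fintype β]

lemma rvCondEntropy_eq_sum (p : Ω → ℝ) (X : Ω → α) (Y : Ω → β) :
    rvCondEntropy p X Y = -∑ ω, p ω *
      Real.log (rvDist p (fun ω => (X ω, Y ω)) (X ω, Y ω) / rvDist p Y (Y ω)) := by
  rw [rvCondEntropy, ← Fintype.sum_prod_type']
  exact congrArg _ (sum_rvDist_mul p (fun ω => (X ω, Y ω)) fun xy =>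
    Real.log (rvDist p (fun ω => (X ω, Y ω)) xy / rvDist p Y xy.2))

lemma sum_mul_log_nonpos {p u : Ω → ℝ} (hp : ∀ ω, 0 ≤ p ω) (hp1 : ∑ ω, p ω = 1)
    (hu : ∀ ω, 0 < p ω → 0 < u ω) (hpu : ∑ ω, p ω * u ω ≤ 1) :
    ∑ ω, p ω * Real.log (u ω) ≤ 0 :=
  calc ∑ ω, p ω * Real.log (u ω) ≤ ∑ ω, p ω * (u ω - 1) := sum_le_sum fun ω _ => by
        rcases (hp ω).eq_or_lt with h0 | h0
        · simp [← h0]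
        · exact mul_le_mul_of_nonneg_left (Real.log_le_sub_one_of_pos (hu ω h0)) h0.le
    _ = ∑ ω, p ω * u ω - 1 := by simp only [mul_sub, mul_one, sum_sub_distrib, hp1]
    _ ≤ 0 := by linarith

lemma rvCondEntropy_le_comp [Fintype γ] [DecidableEq γ] {p : Ω → ℝ} (hp : ∀ ω, 0 ≤ p ω)
    (hp1 : ∑ ω, p ω = 1) (X : Ω → α) (Y : Ω → β) (g : β → γ) :
    rvCondEntropy p X Y ≤ rvCondEntropy p X (fun ω => g (Y ω)) := by
  set Pxy := rvDist p (fun ω => (X ω, Y ω))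
  set Py := rvDist p Y
  set Pxg := rvDist p (fun ω => (X ω, g (Y ω)))
  set Pg := rvDist p (fun ω => g (Y ω))
  -- Gibbs' inequality for the likelihood ratio of `X` given `g ∘ Y` against `X` given `Y`
  let u : α × β → ℝ := fun xy => Pxg (xy.1, g xy.2) / Pg (g xy.2) / (Pxy xy / Py xy.2)
  have hsum : ∑ ω, p ω * u (X ω, Y ω) ≤ 1 := by
    rw [← sum_rvDist_mul p (fun ω => (X ω, Y ω)) u]
    calc ∑ xy, Pxy xy * u xy ≤ ∑ xy, Py xy.2 / Pg (g xy.2) * Pxg (xy.1, g xy.2) :=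
          sum_le_sum fun xy _ => by
            rcases (show 0 ≤ Pxy xy from rvDist_nonneg hp _ xy).eq_or_lt with h0 | h0
            · rw [← h0, zero_mul]
              exact mul_nonneg (div_nonneg (rvDist_nonneg hp _ _) (rvDist_nonneg hp _ _))
                (rvDist_nonneg hp _ _)
            · simp only [u, div_div_eq_mul_div, mul_div_cancel₀ _ h0.ne']
              exact le_of_eq (by ring)
      _ = ∑ y, Py y / Pg (g y) * Pg (g y) := by
          rw [Fintype.sum_prod_type, sum_comm]
          simp only [← mul_sum, Pxg, Pg, sum_rvDist_prod_left]
      _ ≤ ∑ y, Py y := sum_le_sum fun y _ => by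
          rcases (show 0 ≤ Pg (g y) from rvDist_nonneg hp _ _).eq_or_lt with h0 | h0
          · simpa [← h0] using rvDist_nonneg hp Y y
          · rw [div_mul_cancel₀ _ h0.ne']
      _ = 1 := by rw [sum_rvDist, hp1]
  have hpos : ∀ ω, 0 < p ω →
      0 < Pxy (X ω, Y ω) ∧ 0 < Py (Y ω) ∧ 0 < Pxg (X ω, g (Y ω)) ∧ 0 < Pg (g (Y ω)) :=
    fun _ h => ⟨rvDist_self_pos hp h _, rvDist_self_pos hp h _, rvDist_self_pos hp h _,
      rvDist_self_pos hp h _⟩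
  have key := sum_mul_log_nonpos hp hp1 (u := fun ω => u (X ω, Y ω)) (fun ω h => by
    obtain ⟨h1, h2, h3, h4⟩ := hpos ω h
    exact div_pos (div_pos h3 h4) (div_pos h1 h2)) hsum
  have hlog : ∀ ω, p ω * Real.log (u (X ω, Y ω)) =
      p ω * Real.log (Pxg (X ω, g (Y ω)) / Pg (g (Y ω))) -
        p ω * Real.log (Pxy (X ω, Y ω) / Py (Y ω)) := fun ω => by
    rcases (hp ω).eq_or_lt with h0 | h0
    · simp [← h0]
    · obtain ⟨h1, h2, h3, h4⟩ := hpos ω h0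
      rw [Real.log_div (div_pos h3 h4).ne' (div_pos h1 h2).ne']
      ring
  rw [sum_congr rfl fun ω _ => hlog ω, sum_sub_distrib] at key
  rw [rvCondEntropy_eq_sum, rvCondEntropy_eq_sum]
  linarith

end Entropy

section CondIndep

variable {Ω ι σ V : Type*} [Fintype Ω] [Fintype ι] [DecidableEq ι] [DecidableEq σ] [Fintype V]
  [DecidableEq V]

-- `Pr(S = s, Z = v) = ∏ i, Pr(S = s, Z_i = v_i) / Pr(S = s) ^ (n - 1)`, multiplied through so that
-- no division by `Pr(S = s)` occurs.
def CondIndepGiven (p : Ω → ℝ) (S : Ω → σ) (Z : ι → Ω → V) : Prop :=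
  ∀ s v, rvDist p (fun ω => (S ω, fun i => Z i ω)) (s, v) * rvDist p S s ^ (Fintype.card ι - 1) =
    ∏ i, rvDist p (fun ω => (S ω, Z i ω)) (s, v i)

lemma rvDist_restrict_eq_sum (p : Ω → ℝ) (S : Ω → σ) (Z : ι → Ω → V) (C : Finset ι) (s : σ)
    (v : ι → V) :
    rvDist p (fun ω => (S ω, fun j : C => Z j ω)) (s, fun j : C => v j) =
      ∑ v' : ι → V, if ∀ j ∈ C, v' j = v j then
        rvDist p (fun ω => (S ω, fun i => Z i ω)) (s, v') else 0 := by
  simp only [rvDist, ite_sum_zero]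
  rw [sum_comm]
  refine sum_congr rfl fun ω _ => ?_
  rw [Fintype.sum_eq_single (fun i => Z i ω) fun v' hv' => by simp [Ne.symm hv']]
  simp only [Prod.mk.injEq, funext_iff, Subtype.forall, and_true, ite_and]
  split_ifs <;> rfl

variable {p : Ω → ℝ} {S : Ω → σ} {Z : ι → Ω → V}

lemma CondIndepGiven.rvDist_restrict_mul_pow (h : CondIndepGiven p S Z) (C : Finset ι) (s : σ)
    (v : ι → V) :
    rvDist p (fun ω => (S ω, fun j : C => Z j ω)) (s, fun j : C => v j) *
        rvDist p S s ^ (Fintype.card ι - 1) =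
      (∏ j ∈ C, rvDist p (fun ω => (S ω, Z j ω)) (s, v j)) *
        rvDist p S s ^ (Fintype.card ι - #C) := by
  set P : ι → V → ℝ := fun j x => rvDist p (fun ω => (S ω, Z j ω)) (s, x)
  -- summing `∏ j, f j (v' j)` over all `v'` factorizes, and it only sees the `v'` extending `v|_C`
  let f : ι → V → ℝ := fun j x => if j ∈ C ∧ x ≠ v j then 0 else P j x
  have hterm : ∀ v' : ι → V, (if ∀ j ∈ C, v' j = v j then
      rvDist p (fun ω => (S ω, fun i => Z i ω)) (s, v') else 0) *
        rvDist p S s ^ (Fintype.card ι - 1) = ∏ j, f j (v' j) := by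
    intro v'
    split_ifs with hv'
    · rw [h s v']
      exact prod_congr rfl fun j _ => (if_neg fun hj => hj.2 (hv' j hj.1)).symm
    · push Not at hv'
      obtain ⟨j, hj, hne⟩ := hv'
      rw [zero_mul]
      exact (prod_eq_zero (mem_univ j) (by simp [f, hj, hne])).symm
  have hfactor : ∀ j, ∑ x, f j x = if j ∈ C then P j (v j) else rvDist p S s := by
    intro j
    split_ifs with hj
    · simp [f, hj]
    · simp [f, hj, P, sum_rvDist_prod_right]
  rw [rvDist_restrict_eq_sum, sum_mul, sum_congr rfl fun v' _ => hterm v', ← Fintype.prod_sum,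
    prod_congr rfl fun j _ => hfactor j, prod_ite, prod_const]
  simp [P, Finset.filter_not, card_univ_sdiff]

lemma CondIndepGiven.rvDist_insert_mul (h : CondIndepGiven p S Z) {C : Finset ι} {i : ι}
    (hi : i ∉ C) {s : σ} (hs : rvDist p S s ≠ 0) (v : ι → V) :
    rvDist p (fun ω => (S ω, fun j : (insert i C : Finset ι) => Z j ω))
        (s, fun j : (insert i C : Finset ι) => v j) * rvDist p S s =
      rvDist p (fun ω => (S ω, fun j : C => Z j ω)) (s, fun j : C => v j) *
        rvDist p (fun ω => (S ω, Z i ω)) (s, v i) := by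
  have hinsert := h.rvDist_restrict_mul_pow (insert i C) s v
  have hC := h.rvDist_restrict_mul_pow C s v
  rw [prod_insert hi, card_insert_of_notMem hi] at hinsert
  have hcard : #C + 1 ≤ Fintype.card ι := by
    simpa [card_insert_of_notMem hi] using card_le_univ (insert i C)
  rw [show Fintype.card ι - #C = Fintype.card ι - (#C + 1) + 1 by omega, pow_succ] at hC
  refine mul_right_cancel₀ (pow_ne_zero (Fintype.card ι - 1) hs) ?_
  linear_combination rvDist p S s * hinsert - rvDist p (fun ω => (S ω, Z i ω)) (s, v i) * hC

lemma CondIndepGiven.rvCondEntropy_sub_rvCondEntropy_insert [Fintype σ] (hp : ∀ ω, 0 ≤ p ω)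
    (h : CondIndepGiven p S Z) {C : Finset ι} {i : ι} (hi : i ∉ C) :
    rvCondEntropy p S (fun ω (j : C) => Z j ω) -
        rvCondEntropy p S (fun ω (j : (insert i C : Finset ι)) => Z j ω) =
      rvCondEntropy p (Z i) (fun ω (j : C) => Z j ω) - rvCondEntropy p (Z i) S := by
  simp only [rvCondEntropy_eq_sum, neg_sub_neg, ← sum_sub_distrib]
  refine sum_congr rfl fun ω _ => ?_
  rcases (hp ω).eq_or_lt with h0 | h0
  · simp [← h0]
  have hobs : rvDist p (fun ω => (Z i ω, fun j : C => Z j ω)) (Z i ω, fun j : C => Z j ω) =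
      rvDist p (fun ω (j : (insert i C : Finset ι)) => Z j ω) fun j => Z j ω :=
    rvDist_congr_self p fun ω' => by simp [funext_iff]
  have hswap : rvDist p (fun ω => (Z i ω, S ω)) (Z i ω, S ω) =
      rvDist p (fun ω => (S ω, Z i ω)) (S ω, Z i ω) :=
    rvDist_congr_self p fun ω' => by simp [and_comm]
  have hπ : rvDist p S (S ω) ≠ 0 := (rvDist_self_pos hp h0 S).ne'
  have hJ : rvDist p (fun ω => (S ω, fun j : C => Z j ω)) (S ω, fun j : C => Z j ω) ≠ 0 :=
    (rvDist_self_pos hp h0 _).ne'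
  have hJ' : rvDist p (fun ω => (S ω, fun j : (insert i C : Finset ι) => Z j ω))
      (S ω, fun j : (insert i C : Finset ι) => Z j ω) ≠ 0 := (rvDist_self_pos hp h0 _).ne'
  have hO : rvDist p (fun ω (j : C) => Z j ω) (fun j => Z j ω) ≠ 0 :=
    (rvDist_self_pos hp h0 _).ne'
  have hO' : rvDist p (fun ω (j : (insert i C : Finset ι)) => Z j ω) (fun j => Z j ω) ≠ 0 :=
    (rvDist_self_pos hp h0 _).ne'
  have hP : rvDist p (fun ω => (S ω, Z i ω)) (S ω, Z i ω) ≠ 0 := (rvDist_self_pos hp h0 _).ne'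
  have hci := congrArg Real.log (h.rvDist_insert_mul hi hπ fun j => Z j ω)
  rw [Real.log_mul hJ' hπ, Real.log_mul hJ hP] at hci
  rw [hobs, hswap, Real.log_div hJ hO, Real.log_div hJ' hO', Real.log_div hP hπ,
    Real.log_div hO' hO]
  linear_combination p ω * hci

end CondIndep

/-- if the observations `Z_i` are conditionally independent given the hidden
state `S` (expressed multiplicatively:
`Pr(S = s, ∀ i, Z_i = v_i) · Pr(S = s)^(n-1) = ∏_i Pr(S = s, Z_i = v_i)`), then the
information gain `F(A) = H(S) - H(S | Z_A)` is submodular in `A`. -/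
theorem pac_stmt_17 {Ω ι σ V : Type*} [Fintype Ω] [Fintype ι] [DecidableEq ι]
    [Fintype σ] [DecidableEq σ] [Fintype V] [DecidableEq V]
    (p : Ω → ℝ) (hp : ∀ ω, 0 ≤ p ω) (hp1 : ∑ ω, p ω = 1)
    (S : Ω → σ) (Z : ι → Ω → V)
    (hCI : ∀ (s : σ) (v : ι → V),
      (∑ ω, if S ω = s ∧ (∀ i, Z i ω = v i) then p ω else 0) *
          rvDist p S s ^ (Fintype.card ι - 1) =
        ∏ i, ∑ ω, if S ω = s ∧ Z i ω = v i then p ω else 0)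
    (A B : Finset ι) (hAB : A ⊆ B) (i : ι) (hi : i ∉ B) :
    (rvEntropy p S - rvCondEntropy p S (fun ω (j : (insert i B : Finset ι)) => Z j ω)) -
        (rvEntropy p S - rvCondEntropy p S (fun ω (j : B) => Z j ω)) ≤
      (rvEntropy p S - rvCondEntropy p S (fun ω (j : (insert i A : Finset ι)) => Z j ω)) -
        (rvEntropy p S - rvCondEntropy p S (fun ω (j : A) => Z j ω)) := by
  have hZ : CondIndepGiven p S Z := fun s v => by
    simpa [rvDist, Prod.ext_iff, funext_iff] using hCI s v
  have hgainA := hZ.rvCondEntropy_sub_rvCondEntropy_insert hp fun hiA => hi (hAB hiA)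
  have hgainB := hZ.rvCondEntropy_sub_rvCondEntropy_insert hp hi
  have hmono : rvCondEntropy p (Z i) (fun ω (j : B) => Z j ω) ≤
      rvCondEntropy p (Z i) (fun ω (j : A) => Z j ω) :=
    rvCondEntropy_le_comp hp hp1 (Z i) (fun ω (j : B) => Z j ω)
      fun (z : B → V) (j : A) => z ⟨j, hAB j.2⟩
  linarith
end
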